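/- arXiv:1806.09590 — 4 statements merged into one kernel-verified Lean document; each statement's English description precedes it below -/
import Mathlib

section
/- Let f, g be bounded Borel-measurable real functions on a measurable space Z with g strictly positive, bounded above, and bounded away from zero. Let Z_1, ..., Z_k be i.i.d. random variables with law ξ, and let ξ_k denote the empirical measure (1/k)∑δ_{Z_i}. Define α = sup_{z',z''} |f(z')/g(z') − f(z'')/g(z'')| and β = sup_{z',z''} g(z')/g(z''). Then |E[ξ_k(f)/ξ_k(g)] − ξ(f)/ξ(g)| ≤ 2αβ²/k. -/
/-!
Put `m = ξ(g)` and `h = f - (ξ(f)/m) g`. Then `ξ(h) = 0` and `|h| ≤ a g`, and with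
`S = ξ_k(h)`, `T = ξ_k(g)` the error is `ξ_k(f)/ξ_k(g) - ξ(f)/ξ(g) = S/T`. As `E S = 0` and
`E T = m`, we get `E[S/T] = -E[(S/T)(T - m)]/m`. Since `m ≤ b T` gives `|S/T| ≤ (b/m)|S|`,
Cauchy–Schwarz bounds this by `(b/m²) √(Var S · Var T)`. Independence gives
`Var S ≤ a² ξ(g²)/k` and `Var T ≤ ξ(g²)/k`, and `ξ(g²) ≤ b m²`, so the bias is at most `a b²/k`.
-/

open MeasureTheory ProbabilityTheory

section Integral

variable {Ω : Type*} [MeasurableSpace Ω] {μ : Measure Ω}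

theorem sq_integral_mul_le {X Y : Ω → ℝ} (hX : MemLp X 2 μ) (hY : MemLp Y 2 μ) :
    (∫ ω, X ω * Y ω ∂μ) ^ 2 ≤ (∫ ω, X ω ^ 2 ∂μ) * ∫ ω, Y ω ^ 2 ∂μ := by
  have hXY : Integrable (fun ω => X ω * Y ω) μ := hX.integrable_mul hY
  have hquad : ∀ t : ℝ, 0 ≤ (∫ ω, X ω ^ 2 ∂μ) * (t * t) + 2 * (∫ ω, X ω * Y ω ∂μ) * t
      + ∫ ω, Y ω ^ 2 ∂μ := fun t => by
    have h : 0 ≤ ∫ ω, (t * X ω + Y ω) ^ 2 ∂μ := integral_nonneg fun ω => sq_nonneg _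
    have e : (fun ω => (t * X ω + Y ω) ^ 2)
        = fun ω => t ^ 2 * X ω ^ 2 + 2 * t * (X ω * Y ω) + Y ω ^ 2 := by
      funext ω; ring
    have h1 : Integrable (fun ω => t ^ 2 * X ω ^ 2) μ := hX.integrable_sq.const_mul _
    have h2 : Integrable (fun ω => 2 * t * (X ω * Y ω)) μ := hXY.const_mul _
    have h12 : Integrable (fun ω => t ^ 2 * X ω ^ 2 + 2 * t * (X ω * Y ω)) μ := h1.add h2
    rw [e, integral_add h12 hY.integrable_sq, integral_add h1 h2, integral_const_mul,
      integral_const_mul] at h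
    linarith
  have hdiscrim := discrim_le_zero hquad
  rw [discrim] at hdiscrim
  linarith

theorem integral_div_eq_neg_integral_div_mul_sub {S T : Ω → ℝ} {m : ℝ} (hm : m ≠ 0)
    (hS : Integrable S μ) (hS0 : μ[S] = 0) (hST : Integrable (fun ω => S ω / T ω * (T ω - m)) μ)
    (hT0 : ∀ᵐ ω ∂μ, T ω ≠ 0) :
    ∫ ω, S ω / T ω ∂μ = -(∫ ω, S ω / T ω * (T ω - m) ∂μ) / m := by
  have hpt : ∀ᵐ ω ∂μ, S ω / T ω = S ω / m - S ω / T ω * (T ω - m) / m := by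
    filter_upwards [hT0] with ω hω
    field_simp
    ring
  rw [integral_congr_ae hpt, integral_sub (hS.div_const m) (hST.div_const m), integral_div,
    integral_div, hS0]
  ring

theorem abs_integral_div_le_sqrt_variance [IsFiniteMeasure μ] {S T : Ω → ℝ} {m b : ℝ}
    (hS : MemLp S 2 μ) (hT : MemLp T 2 μ) (hS0 : μ[S] = 0) (hTm : μ[T] = m) (hm : 0 < m)
    (hb : 0 ≤ b) (hmT : ∀ᵐ ω ∂μ, m ≤ b * T ω) :
    |∫ ω, S ω / T ω ∂μ| ≤ b / m ^ 2 * √(Var[S; μ] * Var[T; μ]) := by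
  have hT0 : ∀ᵐ ω ∂μ, 0 < T ω := by
    filter_upwards [hmT] with ω hω using pos_of_mul_pos_right (hm.trans_le hω) hb
  have hUS : ∀ᵐ ω ∂μ, |S ω / T ω| ≤ b / m * |S ω| := by
    filter_upwards [hmT, hT0] with ω hω hTω
    rw [abs_div, abs_of_pos hTω, div_le_iff₀ hTω]
    field_simp
    linarith [mul_le_mul_of_nonneg_left hω (abs_nonneg (S ω))]
  have hU : MemLp (fun ω => S ω / T ω) 2 μ :=
    (hS.const_mul (b / m)).of_le (hS.aemeasurable.div hT.aemeasurable).aestronglyMeasurable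
      (by filter_upwards [hUS] with ω hω
          rwa [Real.norm_eq_abs, Real.norm_eq_abs, abs_mul, abs_of_nonneg (div_nonneg hb hm.le)])
  have hV : MemLp (fun ω => T ω - m) 2 μ := hT.sub (memLp_const m)
  have hU2 : ∫ ω, (S ω / T ω) ^ 2 ∂μ ≤ (b / m) ^ 2 * Var[S; μ] := by
    rw [variance_of_integral_eq_zero hS.aemeasurable hS0, ← integral_const_mul]
    refine integral_mono_ae hU.integrable_sq (hS.integrable_sq.const_mul _) ?_
    filter_upwards [hUS] with ω hω
    rw [← sq_abs, ← sq_abs (S ω), ← mul_pow]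
    exact pow_le_pow_left₀ (abs_nonneg _) hω 2
  have hV2 : ∫ ω, (T ω - m) ^ 2 ∂μ = Var[T; μ] := by
    rw [variance_eq_integral hT.aemeasurable, hTm]
  have hUV : |∫ ω, S ω / T ω * (T ω - m) ∂μ| ≤ b / m * √(Var[S; μ] * Var[T; μ]) := by
    rw [← Real.sqrt_sq (div_nonneg hb hm.le), ← Real.sqrt_mul (sq_nonneg _), ← mul_assoc, ← hV2]
    exact Real.abs_le_sqrt ((sq_integral_mul_le hU hV).trans
      (mul_le_mul_of_nonneg_right hU2 (integral_nonneg fun ω => sq_nonneg _)))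
  rw [integral_div_eq_neg_integral_div_mul_sub hm.ne' (hS.integrable one_le_two) hS0
      (hU.integrable_mul hV) (hT0.mono fun ω hω => hω.ne'),
    abs_div, abs_neg, abs_of_pos hm, div_le_iff₀ hm]
  calc _ ≤ b / m * √(Var[S; μ] * Var[T; μ]) := hUV
    _ = _ := by field_simp

end Integral

section Ratio

variable {α : Type*} {f g : α → ℝ} {a b : ℝ}

theorem abs_le_mul_of_abs_div_sub_div_le (hg0 : ∀ z, 0 < g z)
    (ha : ∀ z z', |f z / g z - f z' / g z'| ≤ a) (z₀ z : α) :
    |f z| ≤ (|f z₀ / g z₀| + a) * g z := by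
  have h : |f z / g z| ≤ |f z₀ / g z₀| + a := by
    calc |f z / g z| = |f z₀ / g z₀ + (f z / g z - f z₀ / g z₀)| := by ring_nf
      _ ≤ |f z₀ / g z₀| + a := (abs_add_le _ _).trans (add_le_add_right (ha z z₀) _)
  rwa [abs_div, abs_of_pos (hg0 z), div_le_iff₀ (hg0 z)] at h

variable [MeasurableSpace α] {ξ : Measure α}

theorem memLp_of_div_le [IsProbabilityMeasure ξ] (p : ENNReal) (hg : Measurable g)
    (hg0 : ∀ z, 0 < g z) (hb : ∀ z z', g z / g z' ≤ b) : MemLp g p ξ := by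
  obtain ⟨z₀⟩ := nonempty_of_isProbabilityMeasure ξ
  refine MemLp.of_bound hg.aestronglyMeasurable (b * g z₀) (ae_of_all _ fun z => ?_)
  rw [Real.norm_of_nonneg (hg0 z).le]
  exact (div_le_iff₀ (hg0 z₀)).1 (hb z z₀)

theorem le_mul_integral_of_div_le [IsProbabilityMeasure ξ] (hg : Integrable g ξ)
    (hg0 : ∀ z, 0 < g z) (hb : ∀ z z', g z / g z' ≤ b) (z : α) : g z ≤ b * ∫ z', g z' ∂ξ :=
  calc g z = ∫ _, g z ∂ξ := by simp
    _ ≤ ∫ z', b * g z' ∂ξ := integral_mono (integrable_const _) (hg.const_mul b)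
        fun z' => (div_le_iff₀ (hg0 z')).1 (hb z z')
    _ = b * ∫ z', g z' ∂ξ := integral_const_mul _ _

theorem integral_le_mul_of_div_le [IsProbabilityMeasure ξ] (hg : Integrable g ξ)
    (hg0 : ∀ z, 0 < g z) (hb : ∀ z z', g z / g z' ≤ b) (z : α) : ∫ z', g z' ∂ξ ≤ b * g z :=
  calc ∫ z', g z' ∂ξ ≤ ∫ _, b * g z ∂ξ := integral_mono hg (integrable_const _)
        fun z' => (div_le_iff₀ (hg0 z)).1 (hb z' z)
    _ = b * g z := by simp

theorem integral_sq_le_of_div_le [IsProbabilityMeasure ξ] (hg : Integrable g ξ)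
    (hg0 : ∀ z, 0 < g z) (hb : ∀ z z', g z / g z' ≤ b) :
    ∫ z, g z ^ 2 ∂ξ ≤ b * (∫ z, g z ∂ξ) ^ 2 :=
  calc ∫ z, g z ^ 2 ∂ξ ≤ ∫ z, b * (∫ z', g z' ∂ξ) * g z ∂ξ :=
        integral_mono_of_nonneg (ae_of_all _ fun z => sq_nonneg (g z)) (hg.const_mul _)
          (ae_of_all _ fun z => by
            nlinarith [le_mul_integral_of_div_le hg hg0 hb z, hg0 z])
    _ = b * (∫ z, g z ∂ξ) ^ 2 := by rw [integral_const_mul]; ring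

theorem abs_sub_integral_div_integral_mul_le (hf : Integrable f ξ) (hg : Integrable g ξ)
    (hg0 : ∀ z, 0 < g z) (hm : 0 < ∫ z, g z ∂ξ) (ha : ∀ z z', |f z / g z - f z' / g z'| ≤ a)
    (z : α) : |f z - (∫ z', f z' ∂ξ) / (∫ z', g z' ∂ξ) * g z| ≤ a * g z := by
  have hpt : ∀ z', |f z * g z' - f z' * g z| ≤ a * g z * g z' := fun z' => by
    have e : f z * g z' - f z' * g z = g z * g z' * (f z / g z - f z' / g z') := by
      field_simp [(hg0 z).ne', (hg0 z').ne']
    rw [e, abs_mul, abs_of_pos (mul_pos (hg0 z) (hg0 z'))]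
    nlinarith [ha z z', mul_pos (hg0 z) (hg0 z')]
  have hint : Integrable (fun z' => f z * g z' - f z' * g z) ξ :=
    (hg.const_mul _).sub (hf.mul_const _)
  have e : (f z - (∫ z', f z' ∂ξ) / (∫ z', g z' ∂ξ) * g z) * ∫ z', g z' ∂ξ
      = ∫ z', (f z * g z' - f z' * g z) ∂ξ := by
    rw [integral_sub (hg.const_mul _) (hf.mul_const _), integral_const_mul, integral_mul_const]
    field_simp
  refine le_of_mul_le_mul_right ?_ hm
  calc |f z - (∫ z', f z' ∂ξ) / (∫ z', g z' ∂ξ) * g z| * ∫ z', g z' ∂ξ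
      = |∫ z', (f z * g z' - f z' * g z) ∂ξ| := by rw [← e, abs_mul, abs_of_pos hm]
    _ ≤ ∫ z', |f z * g z' - f z' * g z| ∂ξ := abs_integral_le_integral_abs
    _ ≤ ∫ z', a * g z * g z' ∂ξ := integral_mono hint.abs (hg.const_mul _) hpt
    _ = a * g z * ∫ z', g z' ∂ξ := integral_const_mul _ _

theorem variance_le_sq_mul_integral_sq [IsProbabilityMeasure ξ] {φ : α → ℝ}
    (hφ : AEStronglyMeasurable φ ξ) (hg : MemLp g 2 ξ) (h : ∀ z, |φ z| ≤ a * g z) :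
    Var[φ; ξ] ≤ a ^ 2 * ∫ z, g z ^ 2 ∂ξ := by
  refine (variance_le_expectation_sq hφ).trans ?_
  rw [← integral_const_mul]
  refine integral_mono_of_nonneg (ae_of_all _ fun z => sq_nonneg (φ z))
    (hg.integrable_sq.const_mul _) (ae_of_all _ fun z => ?_)
  simp only [Pi.pow_apply]
  rw [← mul_pow, ← sq_abs]
  exact pow_le_pow_left₀ (abs_nonneg _) (h z) 2

end Ratio

section EmpiricalMean

variable {Ω α ι : Type*} [Fintype ι] {Z : ι → Ω → α} {φ ψ : α → ℝ}

/-- `ξ_k(φ)`: the empirical measure `(1/k) ∑ δ_{Z_i ω}` of the sample, integrated against `φ`. -/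
noncomputable def empiricalMean (Z : ι → Ω → α) (φ : α → ℝ) (ω : Ω) : ℝ :=
  (Fintype.card ι : ℝ)⁻¹ * ∑ i, φ (Z i ω)

theorem empiricalMean_const [Nonempty ι] (c : ℝ) (ω : Ω) :
    empiricalMean Z (fun _ => c) ω = c := by
  simp [empiricalMean]

theorem empiricalMean_mono (h : ∀ z, φ z ≤ ψ z) (ω : Ω) :
    empiricalMean Z φ ω ≤ empiricalMean Z ψ ω :=
  mul_le_mul_of_nonneg_left (Finset.sum_le_sum fun i _ => h _) (by positivity)

theorem empiricalMean_pos [Nonempty ι] (h : ∀ z, 0 < φ z) (ω : Ω) : 0 < empiricalMean Z φ ω :=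
  mul_pos (by positivity) (Finset.sum_pos (fun i _ => h _) Finset.univ_nonempty)

theorem empiricalMean_sub (ω : Ω) :
    empiricalMean Z (fun z => φ z - ψ z) ω = empiricalMean Z φ ω - empiricalMean Z ψ ω := by
  simp only [empiricalMean, Finset.sum_sub_distrib, mul_sub]

theorem empiricalMean_const_mul (c : ℝ) (ω : Ω) :
    empiricalMean Z (fun z => c * φ z) ω = c * empiricalMean Z φ ω := by
  simp only [empiricalMean, ← Finset.mul_sum]
  ring

theorem abs_empiricalMean_le (ω : Ω) :
    |empiricalMean Z φ ω| ≤ empiricalMean Z (fun z => |φ z|) ω := by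
  rw [empiricalMean, abs_mul, abs_of_nonneg (by positivity)]
  exact mul_le_mul_of_nonneg_left (Finset.abs_sum_le_sum_abs _ _) (by positivity)

variable [MeasurableSpace Ω] [MeasurableSpace α] {P : Measure Ω} {ξ : Measure α}

theorem memLp_empiricalMean {p : ENNReal} (hZ : ∀ i, IdentDistrib (Z i) id P ξ)
    (hφ : Measurable φ) (hφp : MemLp φ p ξ) : MemLp (empiricalMean Z φ) p P := by
  have hi : ∀ i, MemLp (fun ω => φ (Z i ω)) p P := fun i => ((hZ i).comp hφ).memLp_iff.2 hφp
  exact (memLp_finsetSum Finset.univ fun i _ => hi i).const_mul _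

theorem integral_empiricalMean [Nonempty ι] (hZ : ∀ i, IdentDistrib (Z i) id P ξ)
    (hφ : Measurable φ) (hφi : Integrable φ ξ) : P[empiricalMean Z φ] = ξ[φ] := by
  have hcomp : ∀ i, IdentDistrib (fun ω => φ (Z i ω)) φ P ξ := fun i => (hZ i).comp hφ
  simp only [empiricalMean]
  rw [integral_const_mul, integral_finsetSum _ fun i _ => (hcomp i).integrable_iff.2 hφi]
  simp [(hcomp _).integral_eq]

theorem variance_empiricalMean [Nonempty ι] (hindep : iIndepFun Z P)
    (hZ : ∀ i, IdentDistrib (Z i) id P ξ) (hφ : Measurable φ) (hφ2 : MemLp φ 2 ξ) :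
    Var[empiricalMean Z φ; P] = Var[φ; ξ] / Fintype.card ι := by
  have hcomp : ∀ i, IdentDistrib (fun ω => φ (Z i ω)) φ P ξ := fun i => (hZ i).comp hφ
  have hrep : empiricalMean Z φ = (Fintype.card ι : ℝ)⁻¹ • ∑ i, fun ω => φ (Z i ω) := by
    funext ω
    simp [empiricalMean, Finset.sum_apply]
  rw [hrep, variance_smul, IndepFun.variance_sum (fun i _ => (hcomp i).memLp_iff.2 hφ2)
    fun i _ j _ hij => (hindep.indepFun hij).comp hφ hφ]
  simp only [(hcomp _).variance_eq, Finset.sum_const, Finset.card_univ, nsmul_eq_mul]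
  field_simp

theorem integrable_empiricalMean_div [IsFiniteMeasure P] [Nonempty ι]
    (hZ : ∀ i, IdentDistrib (Z i) id P ξ) (hφ : Measurable φ) (hψ : Measurable ψ)
    (hψ0 : ∀ z, 0 < ψ z) {a : ℝ} (h : ∀ z, |φ z| ≤ a * ψ z) :
    Integrable (fun ω => empiricalMean Z φ ω / empiricalMean Z ψ ω) P := by
  have hmeas : ∀ {χ : α → ℝ}, Measurable χ → AEMeasurable (empiricalMean Z χ) P := fun hχ =>
    (Finset.aemeasurable_fun_sum _ fun i _ => hχ.comp_aemeasurable (hZ i).aemeasurable_fst)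
      |>.const_mul _
  refine .of_bound ((hmeas hφ).div (hmeas hψ)).aestronglyMeasurable a (ae_of_all _ fun ω => ?_)
  have hpos := empiricalMean_pos (Z := Z) hψ0 ω
  rw [Real.norm_eq_abs, abs_div, abs_of_pos hpos, div_le_iff₀ hpos, ← empiricalMean_const_mul]
  exact (abs_empiricalMean_le ω).trans (empiricalMean_mono h ω)

end EmpiricalMean

section Bias

variable {Ω α ι : Type*} [MeasurableSpace Ω] [MeasurableSpace α] [Fintype ι] [Nonempty ι]
  {P : Measure Ω} [IsProbabilityMeasure P] {ξ : Measure α} [IsProbabilityMeasure ξ]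
  {Z : ι → Ω → α} {g : α → ℝ} {a b : ℝ}

theorem abs_integral_empiricalMean_div_le_of_integral_eq_zero (hindep : iIndepFun Z P)
    (hZ : ∀ i, IdentDistrib (Z i) id P ξ) {h : α → ℝ} (hh : Measurable h) (hg : Measurable g)
    (hh0 : ξ[h] = 0) (hg0 : ∀ z, 0 < g z) (hhg : ∀ z, |h z| ≤ a * g z)
    (hb : ∀ z z', g z / g z' ≤ b) :
    |P[fun ω => empiricalMean Z h ω / empiricalMean Z g ω]| ≤ a * b ^ 2 / Fintype.card ι := by
  obtain ⟨z₀⟩ := nonempty_of_isProbabilityMeasure ξ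
  have ha0 : 0 ≤ a := nonneg_of_mul_nonneg_left ((abs_nonneg _).trans (hhg z₀)) (hg0 z₀)
  have hb0 : 0 ≤ b := by linarith [(div_self (hg0 z₀).ne').symm.trans_le (hb z₀ z₀)]
  have hg2 : MemLp g 2 ξ := memLp_of_div_le 2 hg hg0 hb
  have hgi : Integrable g ξ := hg2.integrable one_le_two
  have hh2 : MemLp h 2 ξ := (hg2.const_mul a).of_le hh.aestronglyMeasurable
    (ae_of_all _ fun z => by simpa [abs_of_nonneg ha0, abs_of_pos (hg0 z)] using hhg z)
  set m := ξ[g]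
  have hm : 0 < m := pos_of_mul_pos_right ((hg0 z₀).trans_le
    (le_mul_integral_of_div_le hgi hg0 hb z₀)) hb0
  have hmT : ∀ ω, m ≤ b * empiricalMean Z g ω := fun ω => by
    simpa only [empiricalMean_const, empiricalMean_const_mul] using
      empiricalMean_mono (Z := Z) (integral_le_mul_of_div_le hgi hg0 hb) ω
  have hgsq : ∫ z, g z ^ 2 ∂ξ ≤ b * m ^ 2 := integral_sq_le_of_div_le hgi hg0 hb
  have hVS : Var[empiricalMean Z h; P] ≤ a ^ 2 * (b * m ^ 2) / Fintype.card ι := by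
    rw [variance_empiricalMean hindep hZ hh hh2]
    gcongr
    exact (variance_le_sq_mul_integral_sq hh.aestronglyMeasurable hg2 hhg).trans
      (mul_le_mul_of_nonneg_left hgsq (sq_nonneg a))
  have hVT : Var[empiricalMean Z g; P] ≤ b * m ^ 2 / Fintype.card ι := by
    rw [variance_empiricalMean hindep hZ hg hg2]
    gcongr
    exact (variance_le_expectation_sq hg.aestronglyMeasurable).trans hgsq
  calc _ ≤ b / m ^ 2 * √(Var[empiricalMean Z h; P] * Var[empiricalMean Z g; P]) :=
        abs_integral_div_le_sqrt_variance (memLp_empiricalMean hZ hh hh2)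
          (memLp_empiricalMean hZ hg hg2)
          (by rw [integral_empiricalMean hZ hh (hh2.integrable one_le_two), hh0])
          (integral_empiricalMean hZ hg hgi) hm hb0 (ae_of_all _ hmT)
    _ ≤ b / m ^ 2 * √((a * b * m ^ 2 / Fintype.card ι) ^ 2) := by
      gcongr
      calc _ ≤ a ^ 2 * (b * m ^ 2) / Fintype.card ι * (b * m ^ 2 / Fintype.card ι) :=
            mul_le_mul hVS hVT (variance_nonneg _ _) (by positivity)
        _ = (a * b * m ^ 2 / Fintype.card ι) ^ 2 := by ring
    _ = a * b ^ 2 / Fintype.card ι := by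
      rw [Real.sqrt_sq (by positivity)]
      field_simp

theorem abs_integral_empiricalMean_div_sub_le (hindep : iIndepFun Z P)
    (hZ : ∀ i, IdentDistrib (Z i) id P ξ) {f : α → ℝ} (hf : Measurable f) (hg : Measurable g)
    (hg0 : ∀ z, 0 < g z) (ha : ∀ z z', |f z / g z - f z' / g z'| ≤ a)
    (hb : ∀ z z', g z / g z' ≤ b) :
    |P[fun ω => empiricalMean Z f ω / empiricalMean Z g ω] - ξ[f] / ξ[g]|
      ≤ a * b ^ 2 / Fintype.card ι := by
  obtain ⟨z₀⟩ := nonempty_of_isProbabilityMeasure ξ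
  have hgi : Integrable g ξ := (memLp_of_div_le 1 hg hg0 hb).integrable le_rfl
  have hfi : Integrable f ξ := (hgi.const_mul _).mono' hf.aestronglyMeasurable
    (ae_of_all _ (abs_le_mul_of_abs_div_sub_div_le hg0 ha z₀))
  have hm : 0 < ξ[g] := integral_pos_iff_support_of_nonneg (fun z => (hg0 z).le) hgi |>.2 <| by
    simp [Function.support_eq_univ fun z => (hg0 z).ne']
  set r := ξ[f] / ξ[g]
  set h : α → ℝ := fun z => f z - r * g z
  have hh : Measurable h := hf.sub (hg.const_mul r)
  have hhg : ∀ z, |h z| ≤ a * g z := abs_sub_integral_div_integral_mul_le hfi hgi hg0 hm ha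
  have hh0 : ξ[h] = 0 := by
    rw [integral_sub hfi (hgi.const_mul r), integral_const_mul]
    exact sub_eq_zero.2 (div_mul_cancel₀ _ hm.ne').symm
  have hsplit : ∀ ω, empiricalMean Z f ω / empiricalMean Z g ω
      = r + empiricalMean Z h ω / empiricalMean Z g ω := fun ω => by
    simp only [h, empiricalMean_sub, empiricalMean_const_mul]
    field_simp [(empiricalMean_pos (Z := Z) hg0 ω).ne']
    ring
  rw [integral_congr_ae (ae_of_all _ hsplit),
    integral_add (integrable_const r) (integrable_empiricalMean_div hZ hh hg hg0 hhg),
    integral_const, probReal_univ, one_smul, add_sub_cancel_left]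
  exact abs_integral_empiricalMean_div_le_of_integral_eq_zero hindep hZ hh hg hh0 hg0 hhg hb

end Bias

theorem stmt_0_general
    {α Ω : Type*} [MeasurableSpace α] [MeasurableSpace Ω]
    (P : Measure Ω) [IsProbabilityMeasure P]
    (ξ : Measure α) [IsProbabilityMeasure ξ]
    (k : ℕ) (hk : 1 ≤ k)
    (Z : Fin k → Ω → α)
    (hmeas : ∀ i, Measurable (Z i))
    (hindep : iIndepFun Z P)
    (hlaw : ∀ i, P.map (Z i) = ξ)
    (f g : α → ℝ) (hf : Measurable f) (hg : Measurable g)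
    (c : ℝ)
    (hc : 0 < c) (hgc : ∀ z, c ≤ g z)
    (a b : ℝ)
    (ha : ∀ z z', |f z / g z - f z' / g z'| ≤ a)
    (hb : ∀ z z', g z / g z' ≤ b) :
    |(∫ ω, ((k : ℝ)⁻¹ * ∑ i, f (Z i ω)) / ((k : ℝ)⁻¹ * ∑ i, g (Z i ω)) ∂P)
      - (∫ z, f z ∂ξ) / (∫ z, g z ∂ξ)| ≤ 2 * a * b ^ 2 / k := by
  have : Nonempty (Fin k) := ⟨⟨0, hk⟩⟩
  have hZ : ∀ i, IdentDistrib (Z i) id P ξ := fun i =>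
    ⟨(hmeas i).aemeasurable, aemeasurable_id, by rw [hlaw i, Measure.map_id]⟩
  have hbias := abs_integral_empiricalMean_div_sub_le hindep hZ hf hg
    (fun z => hc.trans_le (hgc z)) ha hb
  simp only [empiricalMean, Fintype.card_fin] at hbias
  have hbias_nonneg := (abs_nonneg _).trans hbias
  calc _ ≤ a * b ^ 2 / k := hbias
    _ ≤ 2 * a * b ^ 2 / k := by
      linarith [show 2 * a * b ^ 2 / k = 2 * (a * b ^ 2 / k) by ring]

/-- Bias bound for the ratio of empirical integrals (Proposition 2.1, first bound). -/
theorem stmt_0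
    {α Ω : Type*} [MeasurableSpace α] [MeasurableSpace Ω]
    (P : Measure Ω) [IsProbabilityMeasure P]
    (ξ : Measure α) [IsProbabilityMeasure ξ]
    (k : ℕ) (hk : 1 ≤ k)
    (Z : Fin k → Ω → α)
    (hmeas : ∀ i, Measurable (Z i))
    (hindep : iIndepFun Z P)
    (hlaw : ∀ i, P.map (Z i) = ξ)
    (f g : α → ℝ) (hf : Measurable f) (hg : Measurable g)
    (F c C : ℝ) (hF : ∀ z, |f z| ≤ F)
    (hc : 0 < c) (hgc : ∀ z, c ≤ g z) (hgC : ∀ z, g z ≤ C)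
    (a b : ℝ)
    (ha : ∀ z z', |f z / g z - f z' / g z'| ≤ a)
    (hb : ∀ z z', g z / g z' ≤ b) :
    |(∫ ω, ((k : ℝ)⁻¹ * ∑ i, f (Z i ω)) / ((k : ℝ)⁻¹ * ∑ i, g (Z i ω)) ∂P)
      - (∫ z, f z ∂ξ) / (∫ z, g z ∂ξ)| ≤ 2 * a * b ^ 2 / k :=
  stmt_0_general P ξ k hk Z hmeas hindep hlaw f g hf hg c hc hgc a b ha hb
end

section
/- For any N×N column-stochastic matrix A and any two N-dimensional probability vectors z', z'', we have ‖A(z' − z'')‖₁ ≤ τ(A)‖z' − z''‖₁, where τ(A) = (1/2) max_{j',j''} ∑_i |A_{i,j'} − A_{i,j''}| is the Dobrushin ergodicity coefficient. -/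
open Finset

/-- A matrix is column-stochastic if each column is a probability vector. -/
def ColStochastic {N : ℕ} (A : Matrix (Fin N) (Fin N) ℝ) : Prop :=
  (∀ i j, 0 ≤ A i j) ∧ ∀ j, ∑ i, A i j = 1

/-- A probability vector. -/
def ProbVector {N : ℕ} (z : Fin N → ℝ) : Prop :=
  (∀ i, 0 ≤ z i) ∧ ∑ i, z i = 1

/-- The Dobrushin ergodicity coefficient of a column-stochastic matrix. -/
noncomputable def dobrushin {N : ℕ} (A : Matrix (Fin N) (Fin N) ℝ) : ℝ :=
  (1 / 2) * ⨆ p : Fin N × Fin N, ∑ i, |A i p.1 - A i p.2|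

/-- Contraction of the `l¹` distance of probability vectors under a
column-stochastic matrix, with rate given by the ergodicity coefficient. -/
theorem stmt_3 {N : ℕ} (A : Matrix (Fin N) (Fin N) ℝ) (hA : ColStochastic A)
    (z' z'' : Fin N → ℝ) (hz' : ProbVector z') (hz'' : ProbVector z'') :
    ∑ i, |A.mulVec (z' - z'') i| ≤ dobrushin A * ∑ i, |z' i - z'' i| := by
  unfold dobrushin
  classical
  set S : ℝ := ⨆ r : Fin N × Fin N, ∑ i, |A i r.1 - A i r.2| with hSdef
  have hvs : ∑ i, (z' i - z'' i) = 0 := by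
    rw [Finset.sum_sub_distrib, hz'.2, hz''.2]; ring
  set p : Fin N → ℝ := fun j => max (z' j - z'' j) 0 with hp
  set q : Fin N → ℝ := fun j => max (-(z' j - z'' j)) 0 with hq
  have hp0 : ∀ j, 0 ≤ p j := fun j => le_max_right _ _
  have hq0 : ∀ j, 0 ≤ q j := fun j => le_max_right _ _
  have hsub : ∀ j, p j - q j = z' j - z'' j := fun j =>
    max_zero_sub_max_neg_zero_eq_self _
  have habs : ∀ j, p j + q j = |z' j - z'' j| := fun j =>
    max_zero_add_max_neg_zero_eq_abs_self _
  set c : ℝ := ∑ j, p j with hc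
  have hc0 : 0 ≤ c := Finset.sum_nonneg fun j _ => hp0 j
  have hqc : ∑ j, q j = c := by
    have h1 : ∑ j, (p j - q j) = 0 := by simp only [hsub]; exact hvs
    rw [Finset.sum_sub_distrib] at h1
    linarith
  have habs_sum : ∑ i, |z' i - z'' i| = 2 * c := by
    calc ∑ i, |z' i - z'' i| = ∑ i, (p i + q i) := by simp only [habs]
    _ = 2 * c := by rw [Finset.sum_add_distrib, hqc]; ring
  have hSle : ∀ j k : Fin N, ∑ i, |A i j - A i k| ≤ S := by
    intro j k
    exact le_ciSup (f := fun r : Fin N × Fin N => ∑ i, |A i r.1 - A i r.2|)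
      (Set.Finite.bddAbove (Set.finite_range _)) (j, k)
  rcases eq_or_lt_of_le hc0 with hczero | hcpos
  · -- c = 0 case
    have hp' : ∀ j, p j = 0 := fun j =>
      (Finset.sum_eq_zero_iff_of_nonneg (fun j _ => hp0 j)).mp hczero.symm j (mem_univ j)
    have hq' : ∀ j, q j = 0 := fun j => by
      have := (Finset.sum_eq_zero_iff_of_nonneg (fun j _ => hq0 j)).mp (hqc.trans hczero.symm) j (mem_univ j)
      exact this
    have hv0 : ∀ j, z' j - z'' j = 0 := fun j => by rw [← hsub j, hp' j, hq' j]; ring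
    have hz : z' - z'' = (0 : Fin N → ℝ) := funext fun j => hv0 j
    rw [hz, Matrix.mulVec_zero]
    simp [hv0]
  · -- c > 0 case
    have hcne : c ≠ 0 := ne_of_gt hcpos
    have key : ∀ i, c * (A.mulVec (z' - z'') i) = ∑ j, ∑ k, p j * q k * (A i j - A i k) := by
      intro i
      have e1 : ∑ j, ∑ k, p j * q k * (A i j - A i k)
          = (∑ j, p j * A i j) * (∑ k, q k) - (∑ j, p j) * (∑ k, q k * A i k) := by
        rw [Finset.sum_mul, Finset.sum_mul]
        rw [← Finset.sum_sub_distrib]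
        refine Finset.sum_congr rfl fun j _ => ?_
        rw [Finset.mul_sum, Finset.mul_sum, ← Finset.sum_sub_distrib]
        refine Finset.sum_congr rfl fun k _ => ?_
        ring
      rw [e1, hqc]
      have : A.mulVec (z' - z'') i = ∑ j, A i j * (z' j - z'' j) := by
        simp [Matrix.mulVec, dotProduct]
      rw [this]
      have e2 : ∑ j, A i j * (z' j - z'' j) = ∑ j, A i j * (p j - q j) := by
        refine Finset.sum_congr rfl fun j _ => by rw [hsub]
      rw [e2, ← hc]
      calc c * ∑ j, A i j * (p j - q j)
          = ∑ j, (c * (A i j * p j) - c * (A i j * q j)) := by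
            rw [Finset.mul_sum]
            exact Finset.sum_congr rfl fun j _ => by ring
        _ = c * (∑ j, p j * A i j) - c * (∑ j, q j * A i j) := by
            rw [Finset.sum_sub_distrib, Finset.mul_sum, Finset.mul_sum]
            congr 1 <;> exact Finset.sum_congr rfl fun j _ => by ring
        _ = (∑ j, p j * A i j) * c - c * ∑ k, q k * A i k := by ring
    have keybound : ∀ i, |A.mulVec (z' - z'') i| ≤ (1/c) * ∑ j, ∑ k, p j * q k * |A i j - A i k| := by
      intro i
      have h1 : |A.mulVec (z' - z'') i| = (1/c) * |∑ j, ∑ k, p j * q k * (A i j - A i k)| := by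
        rw [← key i, abs_mul, abs_of_nonneg hc0]
        field_simp
      rw [h1]
      apply mul_le_mul_of_nonneg_left _ (by positivity)
      calc |∑ j, ∑ k, p j * q k * (A i j - A i k)|
          ≤ ∑ j, |∑ k, p j * q k * (A i j - A i k)| := Finset.abs_sum_le_sum_abs _ _
        _ ≤ ∑ j, ∑ k, p j * q k * |A i j - A i k| := by
            refine Finset.sum_le_sum fun j _ => ?_
            calc |∑ k, p j * q k * (A i j - A i k)| ≤ ∑ k, |p j * q k * (A i j - A i k)| :=
                Finset.abs_sum_le_sum_abs _ _
              _ = ∑ k, p j * q k * |A i j - A i k| := by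
                  refine Finset.sum_congr rfl fun k _ => ?_
                  rw [abs_mul, abs_of_nonneg (mul_nonneg (hp0 j) (hq0 k))]
    calc ∑ i, |A.mulVec (z' - z'') i|
        ≤ ∑ i, (1/c) * ∑ j, ∑ k, p j * q k * |A i j - A i k| :=
          Finset.sum_le_sum fun i _ => keybound i
      _ = (1/c) * ∑ j, ∑ k, p j * q k * ∑ i, |A i j - A i k| := by
          rw [← Finset.mul_sum]
          congr 1
          rw [Finset.sum_comm]
          refine Finset.sum_congr rfl fun j _ => ?_
          rw [Finset.sum_comm]
          refine Finset.sum_congr rfl fun k _ => ?_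
          rw [Finset.mul_sum]
      _ ≤ (1/c) * ∑ j, ∑ k, p j * q k * S := by
          apply mul_le_mul_of_nonneg_left _ (by positivity)
          refine Finset.sum_le_sum fun j _ => Finset.sum_le_sum fun k _ => ?_
          exact mul_le_mul_of_nonneg_left (hSle j k) (mul_nonneg (hp0 j) (hq0 k))
      _ = c * S := by
          have hsum : ∑ j : Fin N, ∑ k : Fin N, p j * q k * S
              = (∑ j : Fin N, p j) * ((∑ k : Fin N, q k) * S) := by
            rw [Finset.sum_mul]
            refine Finset.sum_congr rfl fun j _ => ?_
            rw [Finset.sum_mul, Finset.mul_sum]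
            exact Finset.sum_congr rfl fun k _ => by ring
          rw [hsum, hqc, ← hc]
          field_simp
      _ = (1/2) * S * (2 * c) := by ring
      _ = (1/2 * S) * ∑ i, |z' i - z'' i| := by rw [habs_sum]
end

section
/- Let {A_k}_{k≥1} be N×N column-stochastic matrices with every entry at least ε⁴/N, and let {B_k}_{k≥1} be d×N matrices with all entries bounded in absolute value by 2K/ε³, where ε ∈ (0,1) and K ≥ 1. Define W_n via W_{n+1} = W_n A_{n+1} + B_{n+1} from an initial d×N matrix W_0, and set V_n = W_n(I − ee^T/N). Then for all n ≥ 1, the maximal absolute entry of V_n satisfies ‖V_n‖ ≤ (4K/ε⁷)(1 + (1−ε⁴)^n ‖V_0‖). -/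
/-!
Each column of `A_k` dominates `ε⁴` times the uniform distribution, so pairing a row vector
with the difference of two columns shrinks its oscillation `max_{j,j'} |w_j - w_{j'}|` by the
factor `ρ = 1 - ε⁴` (Dobrushin). The oscillation of the rows of `W_n` therefore obeys
`osc_{n+1} ≤ ρ osc_n + 4K/ε³`, whose fixed point is `4K/ε⁷`. Centering by `I - ee^T/N` does
not change the oscillation and bounds every entry by it.
-/

open Finset

noncomputable def entryNorm {d N : ℕ} (M : Matrix (Fin d) (Fin N) ℝ) : ℝ :=
  ⨆ p : Fin d × Fin N, |M p.1 p.2|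

section Dobrushin

variable {n : Type*} [Fintype n]

lemma sum_mul_sub_mem_Icc_of_le {ρ M : ℝ} {u p : n → ℝ} (hu : ∀ k, 0 ≤ u k ∧ u k ≤ M)
    (hp : ∀ k, (1 - ρ) / Fintype.card n ≤ p k) (hps : ∑ k, p k = 1) :
    0 ≤ ∑ k, u k * (p k - (1 - ρ) / Fintype.card n) ∧
      ∑ k, u k * (p k - (1 - ρ) / Fintype.card n) ≤ ρ * M := by
  have hcard : (Fintype.card n : ℝ) ≠ 0 := by
    have : Nonempty n := by
      by_contra h
      simp [not_nonempty_iff.mp h] at hps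
    positivity
  refine ⟨sum_nonneg fun k _ => mul_nonneg (hu k).1 (sub_nonneg.mpr (hp k)), ?_⟩
  calc ∑ k, u k * (p k - (1 - ρ) / Fintype.card n)
      ≤ ∑ k, M * (p k - (1 - ρ) / Fintype.card n) :=
        sum_le_sum fun k _ => mul_le_mul_of_nonneg_right (hu k).2 (sub_nonneg.mpr (hp k))
    _ = ρ * M := by
        rw [← mul_sum, sum_sub_distrib, hps, sum_const, card_univ, nsmul_eq_mul]
        field_simp
        ring

lemma abs_sum_mul_sub_le_of_forall_abs_sub_le {ρ M : ℝ} {w p q : n → ℝ}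
    (hw : ∀ k k', |w k - w k'| ≤ M)
    (hp : ∀ k, (1 - ρ) / Fintype.card n ≤ p k) (hq : ∀ k, (1 - ρ) / Fintype.card n ≤ q k)
    (hps : ∑ k, p k = 1) (hqs : ∑ k, q k = 1) :
    |∑ k, w k * (p k - q k)| ≤ ρ * M := by
  have hne : (univ : Finset n).Nonempty := by
    by_contra h
    simp [not_nonempty_iff_eq_empty.mp h] at hps
  obtain ⟨k₀, -, hk₀⟩ := exists_min_image univ w hne
  have hu : ∀ k, 0 ≤ w k - w k₀ ∧ w k - w k₀ ≤ M := fun k =>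
    ⟨sub_nonneg.mpr (hk₀ k (mem_univ k)), (abs_le.mp (hw k k₀)).2⟩
  -- `p - q` has total mass zero, so `w` may be shifted by its minimum.
  have hshift : ∑ k, w k * (p k - q k) =
      ∑ k, (w k - w k₀) * (p k - (1 - ρ) / Fintype.card n) -
        ∑ k, (w k - w k₀) * (q k - (1 - ρ) / Fintype.card n) := by
    simp only [mul_sub, sub_mul, sum_sub_distrib, ← mul_sum, ← sum_mul, hps, hqs]
    ring
  obtain ⟨hp0, hpM⟩ := sum_mul_sub_mem_Icc_of_le hu hp hps
  obtain ⟨hq0, hqM⟩ := sum_mul_sub_mem_Icc_of_le hu hq hqs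
  rw [hshift]
  exact abs_sub_le_of_nonneg_of_le hp0 hpM hq0 hqM

end Dobrushin

section AffineRecursion

variable {m n : Type*} [Fintype n]

lemma abs_sub_mul_add_apply_le {ρ b M : ℝ} {W B : Matrix m n ℝ} {A : Matrix n n ℝ} {i : m}
    (hW : ∀ j j', |W i j - W i j'| ≤ M)
    (hA : ∀ k j, (1 - ρ) / Fintype.card n ≤ A k j) (hAcol : ∀ j, ∑ k, A k j = 1)
    (hB : ∀ j, |B i j| ≤ b) (j j' : n) :
    |(W * A + B) i j - (W * A + B) i j'| ≤ ρ * M + 2 * b := by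
  have hsplit : (W * A + B) i j - (W * A + B) i j' =
      ∑ k, W i k * (A k j - A k j') + (B i j - B i j') := by
    simp only [Matrix.add_apply, Matrix.mul_apply, mul_sub, sum_sub_distrib]
    ring
  calc |(W * A + B) i j - (W * A + B) i j'|
      ≤ |∑ k, W i k * (A k j - A k j')| + |B i j - B i j'| := by
        rw [hsplit]
        exact abs_add_le _ _
    _ ≤ ρ * M + 2 * b := by
        gcongr
        · exact abs_sum_mul_sub_le_of_forall_abs_sub_le hW (hA · j) (hA · j')
            (hAcol j) (hAcol j')
        · linarith [abs_sub (B i j) (B i j'), hB j, hB j']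

/-- The bound `ρ ^ t * M₀ + 2b / (1 - ρ)` is stable under `M ↦ ρ M + 2b`. -/
lemma abs_sub_apply_le_of_forall_eq_mul_add {ρ b M₀ : ℝ} (hρ : ρ < 1)
    {A : ℕ → Matrix n n ℝ} {B W : ℕ → Matrix m n ℝ}
    (hA : ∀ k, 1 ≤ k → ∀ i j, (1 - ρ) / Fintype.card n ≤ A k i j)
    (hAcol : ∀ k, 1 ≤ k → ∀ j, ∑ i, A k i j = 1)
    (hB : ∀ k, 1 ≤ k → ∀ i j, |B k i j| ≤ b)
    (hW : ∀ t, W (t + 1) = W t * A (t + 1) + B (t + 1))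
    (hW₀ : ∀ i j j', |W 0 i j - W 0 i j'| ≤ M₀) (t : ℕ) (i : m) (j j' : n) :
    |W t i j - W t i j'| ≤ ρ ^ t * M₀ + 2 * b / (1 - ρ) := by
  induction t generalizing j j' with
  | zero =>
    have hb : 0 ≤ b := (abs_nonneg _).trans (hB 1 le_rfl i j)
    have : 0 ≤ 2 * b / (1 - ρ) := div_nonneg (by positivity) (sub_nonneg.mpr hρ.le)
    simpa using (hW₀ i j j').trans (le_add_of_nonneg_right this)
  | succ t ih =>
    have hk : 1 ≤ t + 1 := Nat.le_add_left 1 t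
    calc |W (t + 1) i j - W (t + 1) i j'|
        ≤ ρ * (ρ ^ t * M₀ + 2 * b / (1 - ρ)) + 2 * b := by
          rw [hW t]
          exact abs_sub_mul_add_apply_le ih (hA _ hk) (hAcol _ hk) (hB _ hk i) j j'
      _ = ρ ^ (t + 1) * M₀ + 2 * b / (1 - ρ) := by
          field_simp [sub_ne_zero.mpr hρ.ne']
          ring

end AffineRecursion

section Centering

variable {m n : Type*} [Fintype n]

lemma mul_one_sub_of_const_apply [DecidableEq n] (W : Matrix m n ℝ) (c : ℝ) (i : m) (j : n) :
    (W * (1 - Matrix.of fun _ _ : n => c) : Matrix m n ℝ) i j = W i j - c * ∑ k, W i k := by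
  simp only [Matrix.mul_apply, Matrix.sub_apply, Matrix.of_apply, Matrix.one_apply, mul_sub,
    sum_sub_distrib, mul_ite, mul_one, mul_zero, sum_ite_eq', mem_univ, if_true, ← sum_mul,
    mul_comm c]

lemma mul_one_sub_of_const_apply_sub [DecidableEq n] (W : Matrix m n ℝ) (c : ℝ) (i : m)
    (j j' : n) :
    (W * (1 - Matrix.of fun _ _ : n => c) : Matrix m n ℝ) i j -
      (W * (1 - Matrix.of fun _ _ : n => c) : Matrix m n ℝ) i j' = W i j - W i j' := by
  rw [mul_one_sub_of_const_apply, mul_one_sub_of_const_apply]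
  ring

lemma abs_sub_sum_div_card_le {w : n → ℝ} {M : ℝ} {j : n} (hw : ∀ k, |w j - w k| ≤ M) :
    |w j - (∑ k, w k) / Fintype.card n| ≤ M := by
  have hcard : (0 : ℝ) < Fintype.card n := by
    have : Nonempty n := ⟨j⟩
    exact_mod_cast Fintype.card_pos
  have hmean : w j - (∑ k, w k) / Fintype.card n = (∑ k, (w j - w k)) / Fintype.card n := by
    rw [sum_sub_distrib, sum_const, card_univ, nsmul_eq_mul]
    field_simp
  rw [hmean, abs_div, abs_of_pos hcard, div_le_iff₀ hcard]
  calc |∑ k, (w j - w k)| ≤ ∑ k, |w j - w k| := abs_sum_le_sum_abs _ _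
    _ ≤ ∑ _k : n, M := sum_le_sum fun k _ => hw k
    _ = M * Fintype.card n := by rw [sum_const, card_univ, nsmul_eq_mul, mul_comm]

end Centering

section EntryNorm

variable {d N : ℕ}

lemma abs_apply_le_entryNorm (M : Matrix (Fin d) (Fin N) ℝ) (i : Fin d) (j : Fin N) :
    |M i j| ≤ entryNorm M :=
  le_ciSup (f := fun p : Fin d × Fin N => |M p.1 p.2|) (Set.finite_range _).bddAbove (i, j)

lemma abs_sub_apply_le_two_mul_entryNorm (M : Matrix (Fin d) (Fin N) ℝ) (i : Fin d)
    (j j' : Fin N) : |M i j - M i j'| ≤ 2 * entryNorm M := by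
  rw [two_mul]
  exact (abs_sub _ _).trans <|
    add_le_add (abs_apply_le_entryNorm _ _ _) (abs_apply_le_entryNorm _ _ _)

lemma entryNorm_nonneg (M : Matrix (Fin d) (Fin N) ℝ) : 0 ≤ entryNorm M :=
  Real.iSup_nonneg fun _ => abs_nonneg _

lemma entryNorm_le {M : Matrix (Fin d) (Fin N) ℝ} {a : ℝ} (h : ∀ i j, |M i j| ≤ a)
    (ha : 0 ≤ a) : entryNorm M ≤ a :=
  Real.iSup_le (fun p => h p.1 p.2) ha

end EntryNorm

theorem stmt_6_general {d N : ℕ}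
    (ε K : ℝ) (hε : ε ∈ Set.Ioo (0 : ℝ) 1) (hK : 1 ≤ K)
    (A : ℕ → Matrix (Fin N) (Fin N) ℝ)
    (hAnn : ∀ k, 1 ≤ k → ∀ i j, ε ^ 4 / N ≤ A k i j)
    (hAcol : ∀ k, 1 ≤ k → ∀ j, ∑ i, A k i j = 1)
    (B : ℕ → Matrix (Fin d) (Fin N) ℝ)
    (hB : ∀ k, 1 ≤ k → ∀ i j, |B k i j| ≤ 2 * K / ε ^ 3)
    (W : ℕ → Matrix (Fin d) (Fin N) ℝ)
    (hW : ∀ n, W (n + 1) = W n * A (n + 1) + B (n + 1))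
    (V : ℕ → Matrix (Fin d) (Fin N) ℝ)
    (hV : ∀ n, V n = W n * (1 - Matrix.of fun _ _ : Fin N => (1 : ℝ) / N)) :
    ∀ n, 1 ≤ n →
      entryNorm (V n) ≤ (4 * K / ε ^ 7) * (1 + (1 - ε ^ 4) ^ n * entryNorm (V 0)) := by
  intro n _
  obtain ⟨hε₀, hε₁⟩ := hε
  have hρ : 1 - ε ^ 4 < 1 := by linarith [pow_pos hε₀ 4]
  have hA : ∀ k, 1 ≤ k → ∀ i j, (1 - (1 - ε ^ 4)) / Fintype.card (Fin N) ≤ A k i j := by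
    simpa using hAnn
  have hW₀ : ∀ i j j', |W 0 i j - W 0 i j'| ≤ 2 * entryNorm (V 0) := fun i j j' => by
    rw [← mul_one_sub_of_const_apply_sub, ← hV]
    exact abs_sub_apply_le_two_mul_entryNorm _ _ _ _
  have hosc := abs_sub_apply_le_of_forall_eq_mul_add hρ hA hAcol hB hW hW₀ n
  have hfixed : 2 * (2 * K / ε ^ 3) / (1 - (1 - ε ^ 4)) = 4 * K / ε ^ 7 := by
    field_simp
    ring
  have htwo : 2 ≤ 4 * K / ε ^ 7 := by
    rw [le_div_iff₀ (by positivity)]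
    nlinarith [pow_le_one₀ hε₀.le hε₁.le (n := 7)]
  have hVn₀ : 0 ≤ (1 - ε ^ 4) ^ n * entryNorm (V 0) := mul_nonneg
    (pow_nonneg (by linarith [pow_le_one₀ hε₀.le hε₁.le (n := 4)]) n) (entryNorm_nonneg _)
  refine entryNorm_le (fun i j => ?_) (by positivity)
  calc |V n i j| ≤ (1 - ε ^ 4) ^ n * (2 * entryNorm (V 0)) + 4 * K / ε ^ 7 := by
        rw [hV, mul_one_sub_of_const_apply, one_div_mul_eq_div, ← hfixed]
        simpa only [Fintype.card_fin] using abs_sub_sum_div_card_le (hosc i j)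
    _ ≤ (4 * K / ε ^ 7) * (1 + (1 - ε ^ 4) ^ n * entryNorm (V 0)) := by nlinarith

/-- Uniform-in-time bound on the centered weight matrices `V_n = W_n(I - ee^T/N)`
generated by the recursion `W_{n+1} = W_n A_{n+1} + B_{n+1}`
(Proposition 4.1, key estimate). -/
theorem stmt_6 {d N : ℕ} (hd : 0 < d) (hN : 0 < N)
    (ε K : ℝ) (hε : ε ∈ Set.Ioo (0 : ℝ) 1) (hK : 1 ≤ K)
    (A : ℕ → Matrix (Fin N) (Fin N) ℝ)
    (hAnn : ∀ k, 1 ≤ k → ∀ i j, ε ^ 4 / N ≤ A k i j)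
    (hAcol : ∀ k, 1 ≤ k → ∀ j, ∑ i, A k i j = 1)
    (B : ℕ → Matrix (Fin d) (Fin N) ℝ)
    (hB : ∀ k, 1 ≤ k → ∀ i j, |B k i j| ≤ 2 * K / ε ^ 3)
    (W : ℕ → Matrix (Fin d) (Fin N) ℝ)
    (hW : ∀ n, W (n + 1) = W n * A (n + 1) + B (n + 1))
    (V : ℕ → Matrix (Fin d) (Fin N) ℝ)
    (hV : ∀ n, V n = W n * (1 - Matrix.of fun _ _ : Fin N => (1 : ℝ) / N)) :
    ∀ n, 1 ≤ n →
      entryNorm (V n) ≤ (4 * K / ε ^ 7) * (1 + (1 - ε ^ 4) ^ n * entryNorm (V 0)) :=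
  stmt_6_general ε K hε hK A hAnn hAcol B hB W hW V hV
end

section
/- Let f: Z → ℝ and g: Z → (0,∞) be bounded measurable functions with inf g > 0. Then for any two probability measures η, η' on Z, |η(f)/η(g) − η'(f)/η'(g)| ≤ α·β·‖η − η'‖_{TV}, where α = sup_{z',z''}|f(z')/g(z') − f(z'')/g(z'')| and β = sup_{z',z''} g(z')/g(z''). -/
open MeasureTheory

private lemma intg_of_bdd {Z : Type*} [MeasurableSpace Z] {μ : Measure Z}
    [IsFiniteMeasure μ] {h : Z → ℝ} (hm : Measurable h) {K : ℝ}
    (hK : ∀ z, |h z| ≤ K) : Integrable h μ :=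
  ⟨hm.aestronglyMeasurable,
    HasFiniteIntegral.of_bounded (ae_of_all _ fun z => by
      simpa [Real.norm_eq_abs] using hK z)⟩

private lemma tv_bound {Z : Type*} [MeasurableSpace Z] (h : Z → ℝ)
    (hm : Measurable h) (K : ℝ) (hK : ∀ z, |h z| ≤ K) (_hK0 : 0 ≤ K)
    (η η' : Measure Z) [IsProbabilityMeasure η] [IsProbabilityMeasure η'] :
    |(∫ z, h z ∂η) - ∫ z, h z ∂η'|
      ≤ K * (SignedMeasure.totalVariation (η.toSignedMeasure - η'.toSignedMeasure)
          Set.univ).toReal := by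
  set s := η.toSignedMeasure - η'.toSignedMeasure with hs
  set p := s.toJordanDecomposition.posPart with hp
  set n := s.toJordanDecomposition.negPart with hn
  have hps : IsFiniteMeasure p := s.toJordanDecomposition.posPart_finite
  have hns : IsFiniteMeasure n := s.toJordanDecomposition.negPart_finite
  have hmeq : η + n = η' + p := by
    ext A hA
    have h1 : s A = (η A).toReal - (η' A).toReal := by
      rw [hs]
      exact Measure.toSignedMeasure_sub_apply hA
    have h2 : s A = (p A).toReal - (n A).toReal := by
      conv_lhs => rw [← s.toSignedMeasure_toJordanDecomposition]
      exact Measure.toSignedMeasure_sub_apply hA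
    have hreal : (η A).toReal + (n A).toReal = (η' A).toReal + (p A).toReal := by
      rw [h1] at h2; linarith
    have := measure_ne_top η A
    have := measure_ne_top η' A
    have := measure_ne_top p A
    have := measure_ne_top n A
    rw [Measure.add_apply, Measure.add_apply]
    rw [← ENNReal.toReal_eq_toReal_iff' (by finiteness) (by finiteness)]
    rw [ENNReal.toReal_add (by finiteness) (by finiteness),
      ENNReal.toReal_add (by finiteness) (by finiteness)]
    exact hreal
  have iη : Integrable h η := intg_of_bdd hm hK
  have iη' : Integrable h η' := intg_of_bdd hm hK
  have ip : Integrable h p := intg_of_bdd hm hK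
  have inn : Integrable h n := intg_of_bdd hm hK
  have hint : (∫ z, h z ∂η) + ∫ z, h z ∂n = (∫ z, h z ∂η') + ∫ z, h z ∂p := by
    rw [← integral_add_measure iη inn, ← integral_add_measure iη' ip, hmeq]
  have hdiff : (∫ z, h z ∂η) - ∫ z, h z ∂η' = (∫ z, h z ∂p) - ∫ z, h z ∂n := by
    linarith
  rw [hdiff]
  have hbp : |∫ z, h z ∂p| ≤ K * (p Set.univ).toReal := by
    have := norm_integral_le_of_norm_le_const (μ := p) (f := h) (C := K)
        (ae_of_all _ fun z => by simpa [Real.norm_eq_abs] using hK z)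
    simpa [Real.norm_eq_abs, Measure.real] using this
  have hbn : |∫ z, h z ∂n| ≤ K * (n Set.univ).toReal := by
    have := norm_integral_le_of_norm_le_const (μ := n) (f := h) (C := K)
        (ae_of_all _ fun z => by simpa [Real.norm_eq_abs] using hK z)
    simpa [Real.norm_eq_abs, Measure.real] using this
  have htv : (SignedMeasure.totalVariation s Set.univ).toReal
      = (p Set.univ).toReal + (n Set.univ).toReal := by
    rw [SignedMeasure.totalVariation, Measure.add_apply,
      ENNReal.toReal_add (by finiteness) (by finiteness)]
  rw [htv]
  calc |(∫ z, h z ∂p) - ∫ z, h z ∂n| ≤ |∫ z, h z ∂p| + |∫ z, h z ∂n| := abs_sub _ _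
    _ ≤ K * (p Set.univ).toReal + K * (n Set.univ).toReal := add_le_add hbp hbn
    _ = K * ((p Set.univ).toReal + (n Set.univ).toReal) := by ring

/-- Lipschitz-type estimate for normalized integral ratios with respect to the
total variation distance between probability measures. -/
theorem stmt_12 {Z : Type*} [MeasurableSpace Z]
    (f g : Z → ℝ) (hf : Measurable f) (hg : Measurable g)
    (F c C : ℝ) (hF : ∀ z, |f z| ≤ F) (hc : 0 < c)
    (hgc : ∀ z, c ≤ g z) (hgC : ∀ z, g z ≤ C)
    (a b : ℝ)
    (ha : ∀ z z', |f z / g z - f z' / g z'| ≤ a)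
    (hb : ∀ z z', g z / g z' ≤ b)
    (η η' : Measure Z) [IsProbabilityMeasure η] [IsProbabilityMeasure η'] :
    |(∫ z, f z ∂η) / (∫ z, g z ∂η) - (∫ z, f z ∂η') / (∫ z, g z ∂η')|
      ≤ a * b *
        (SignedMeasure.totalVariation (η.toSignedMeasure - η'.toSignedMeasure)
          Set.univ).toReal := by
  -- Z is nonempty
  have hne : Nonempty Z := by
    by_contra hZ
    rw [not_nonempty_iff] at hZ
    have h1 : η Set.univ = 1 := measure_univ
    rw [Set.univ_eq_empty_iff.mpr hZ, measure_empty] at h1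
    exact zero_ne_one h1
  obtain ⟨z₀⟩ := hne
  have ha0 : 0 ≤ a := le_trans (abs_nonneg _) (ha z₀ z₀)
  have hb1 : (1:ℝ) ≤ b := by simpa [div_self (ne_of_gt (lt_of_lt_of_le hc (hgc z₀)))] using hb z₀ z₀
  have hgpos : ∀ z, 0 < g z := fun z => lt_of_lt_of_le hc (hgc z)
  have hgb : ∀ z, |g z| ≤ C := fun z => by
    rw [abs_of_pos (hgpos z)]; exact hgC z
  -- integrability
  have ifη : Integrable f η := intg_of_bdd hf hF
  have ifη' : Integrable f η' := intg_of_bdd hf hF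
  have igη : Integrable g η := intg_of_bdd hg hgb
  have igη' : Integrable g η' := intg_of_bdd hg hgb
  -- lower bounds on ∫ g
  have hBc : ∀ (μ : Measure Z) [IsProbabilityMeasure μ], Integrable g μ →
      c ≤ ∫ z, g z ∂μ := by
    intro μ _ hi
    calc c = ∫ _, c ∂μ := by simp
      _ ≤ ∫ z, g z ∂μ := integral_mono (integrable_const c) hi hgc
  have hB : 0 < ∫ z, g z ∂η := lt_of_lt_of_le hc (hBc η igη)
  have hB' : 0 < ∫ z, g z ∂η' := lt_of_lt_of_le hc (hBc η' igη')
  set B := ∫ z, g z ∂η with hBdef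
  set A := ∫ z, f z ∂η with hAdef
  set B' := ∫ z, g z ∂η' with hB'def
  set A' := ∫ z, f z ∂η' with hA'def
  set r := A' / B' with hrdef
  -- g z ≤ b * B
  have hgB : ∀ z, g z ≤ b * B := by
    intro z
    have h1 : ∀ z', g z ≤ b * g z' := fun z' =>
      (div_le_iff₀ (hgpos z')).mp (hb z z')
    calc g z = ∫ _, g z ∂η := by simp
      _ ≤ ∫ z', b * g z' ∂η := integral_mono (integrable_const _) (igη.const_mul b) h1
      _ = b * B := by rw [integral_const_mul]
  -- |f z / g z - r| ≤ a
  have hra : ∀ z, |f z / g z - r| ≤ a := by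
    intro z
    set t := f z / g z with htdef
    have key : |A' - t * B'| ≤ a * B' := by
      have h1 : A' - t * B' = ∫ z', (f z' - t * g z') ∂η' := by
        rw [integral_sub ifη' (igη'.const_mul t), integral_const_mul]
      rw [h1]
      have h2 : ∀ z', |f z' - t * g z'| ≤ a * g z' := by
        intro z'
        have : f z' - t * g z' = (f z' / g z' - t) * g z' := by
          rw [sub_mul, div_mul_cancel₀ _ (ne_of_gt (hgpos z'))]
        rw [this, abs_mul, abs_of_pos (hgpos z')]
        exact mul_le_mul_of_nonneg_right (ha z' z) (le_of_lt (hgpos z'))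
      calc |∫ z', (f z' - t * g z') ∂η'| ≤ ∫ z', |f z' - t * g z'| ∂η' := by
            simpa [Real.norm_eq_abs] using
              norm_integral_le_integral_norm (μ := η') (fun z' => f z' - t * g z')
        _ ≤ ∫ z', a * g z' ∂η' := by
            refine integral_mono ?_ (igη'.const_mul a) h2
            exact (ifη'.sub (igη'.const_mul t)).abs
        _ = a * B' := by rw [integral_const_mul]
    have heq : t - r = (t * B' - A') / B' := by
      rw [hrdef]; field_simp [ne_of_gt hB']
    have : |t - r| = |A' - t * B'| / B' := by
      rw [heq, abs_div, abs_of_pos hB', abs_sub_comm]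
    rw [this, div_le_iff₀ hB']
    exact key
  -- the transfer function
  set h : Z → ℝ := fun z => (f z - r * g z) / B with hhdef
  have hhm : Measurable h := ((hf.sub (hg.const_mul r)).div_const B)
  have hhb : ∀ z, |h z| ≤ a * b := by
    intro z
    have e1 : (f z / g z - r) * g z = f z - r * g z := by
      rw [sub_mul, div_mul_cancel₀ _ (ne_of_gt (hgpos z))]
    have h1 : h z = (f z / g z - r) * (g z / B) := by
      show (f z - r * g z) / B = _
      rw [← e1]; ring
    rw [h1, abs_mul]
    have h2 : |g z / B| ≤ b := by
      rw [abs_of_pos (div_pos (hgpos z) hB), div_le_iff₀ hB]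
      exact hgB z
    exact mul_le_mul (hra z) h2 (abs_nonneg _) ha0
  -- integrals of h
  have ihη : Integrable h η := intg_of_bdd hhm hhb
  have ihη' : Integrable h η' := intg_of_bdd hhm hhb
  have heη : ∫ z, h z ∂η = A / B - r := by
    rw [hhdef]
    simp only [integral_div]
    rw [integral_sub ifη (igη.const_mul r), integral_const_mul]
    rw [← hAdef, ← hBdef]
    field_simp [ne_of_gt hB]
  have heη' : ∫ z, h z ∂η' = (A' / B' - r) * (B' / B) := by
    rw [hhdef]
    simp only [integral_div]
    rw [integral_sub ifη' (igη'.const_mul r), integral_const_mul]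
    rw [← hA'def, ← hB'def]
    field_simp [ne_of_gt hB, ne_of_gt hB']
  have heη'0 : ∫ z, h z ∂η' = 0 := by
    rw [heη', hrdef, sub_self, zero_mul]
  have key : A / B - A' / B' = (∫ z, h z ∂η) - ∫ z, h z ∂η' := by
    rw [heη, heη'0, hrdef]; ring
  rw [key]
  exact tv_bound h hhm (a * b) hhb (mul_nonneg ha0 (le_trans zero_le_one hb1)) η η'
end
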